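/- Let φ = ∃x₁^{r₁} ⋯ ∃x_k^{r_k} ∀y₁^{s₁} ⋯ ∀y_l^{s_l} θ be an ∃*∀* sentence of type theory with r₁ ≤ ... ≤ r_k and θ quantifier-free. If some model N of TSTI satisfies φ, and M is a finitely generated model of TST with at least G_k(r_k) atoms, then M satisfies φ. -/

import Mathlib

/-- The iterated power set: `IterP X 0 = X`, `IterP X (n+1) = P(IterP X n)`. -/
def IterP (X : Type) : ℕ → Type
  | 0 => X
  | n + 1 => Set (IterP X n)

/-- A model of TST: domains `D n` for each type, membership relations between
consecutive types, satisfying extensionality and comprehension. -/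
structure TSTModel where
  D : ℕ → Type
  mem : ∀ n, D n → D (n + 1) → Prop
  ext : ∀ n (y z : D (n + 1)), (∀ x, mem n x y ↔ mem n x z) → y = z
  comp : ∀ n (φ : D n → Prop), ∃ y : D (n + 1), ∀ x, mem n x y ↔ φ x

/-- The finitely generated model of TST over a set `X`: type `n` is `P^n(X)` and
membership is true membership. -/
def fgModel (X : Type) : TSTModel where
  D := IterP X
  mem := fun n x y => x ∈ (show Set (IterP X n) from y)
  ext := fun n y z h => Set.ext h
  comp := fun n φ => ⟨{x | φ x}, fun _ => Iff.rfl⟩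

/-- The recursion `G_k(0) = k`, `G_k(n+1) = C(G_k(n), 2) + k`. -/
def Gk (k : ℕ) : ℕ → ℕ
  | 0 => k
  | n + 1 => Nat.choose (Gk k n) 2 + k

/-- Quantifier-free formulae of the language of type theory in a context of `p`
variables whose types are given by `ty`. -/
inductive QF (p : ℕ) (ty : Fin p → ℕ) : Type
  | eq (i j : Fin p) (h : ty i = ty j) : QF p ty
  | mem (i j : Fin p) (h : ty j = ty i + 1) : QF p ty
  | not (φ : QF p ty) : QF p ty
  | and (φ ψ : QF p ty) : QF p ty
  | or (φ ψ : QF p ty) : QF p ty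

/-- Evaluation of a quantifier-free formula in a model of TST under an assignment. -/
def QF.eval (N : TSTModel) {p : ℕ} {ty : Fin p → ℕ} (v : ∀ i : Fin p, N.D (ty i)) :
    QF p ty → Prop
  | .eq i j h => cast (congrArg N.D h) (v i) = v j
  | .mem i j h => N.mem (ty i) (v i) (cast (congrArg N.D h) (v j))
  | .not φ => ¬ φ.eval N v
  | .and φ ψ => φ.eval N v ∧ ψ.eval N v
  | .or φ ψ => φ.eval N v ∨ ψ.eval N v

/-- Satisfaction of the `∃*∀*` sentence `∃ x₁ ⋯ x_k ∀ y₁ ⋯ y_l, θ` in a model of TST,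
where the context `Fin (k + l)` lists the `x`'s first and then the `y`'s. -/
def SatEA (N : TSTModel) (k l : ℕ) (ty : Fin (k + l) → ℕ) (θ : QF (k + l) ty) : Prop :=
  ∃ a : ∀ i : Fin k, N.D (ty (Fin.castAdd l i)),
    ∀ b : ∀ j : Fin l, N.D (ty (Fin.natAdd k j)),
      θ.eval N (Fin.addCases a b)

/-! Starting from witnesses of the existential quantifiers in `N`, close them off downwards
under the choice of one separating element for each pair of distinct sets: the pairs at
type `n + 1` cost at most `C(|T_{n+1}|, 2)` new elements at type `n`, which together with
the at most `k` witnesses of type `n` yields the bound `G_k`. Send `|X|` atoms injectively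
onto a superset of the type-`0` part (possible as `N` has infinitely many individuals) and
extend upwards, mapping `S ⊆ P^n(X)` to the element of the closure with trace `S` on the
image if there is one, and to the set with extension the image of `S` otherwise. Since
the closure is separated by its lower level, every one of its elements is hit, so this
is a membership-preserving embedding of `P^*(X)` into `N` that covers the witnesses, and
universal quantifier-free statements pass down along it. -/

open Function Set

namespace TSTModel

variable (N : TSTModel)

def Separates {n : ℕ} (S : Set (N.D n)) (T : Set (N.D (n + 1))) : Prop :=
  ∀ y ∈ T, ∀ z ∈ T, (∀ x ∈ S, N.mem n x y ↔ N.mem n x z) → y = z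

lemma exists_not_mem_iff_of_ne {n : ℕ} {y z : N.D (n + 1)} (h : y ≠ z) :
    ∃ x, ¬(N.mem n x y ↔ N.mem n x z) := by
  by_contra! hyz
  exact h (N.ext n y z hyz)

lemma exists_separates_card_le {n : ℕ} (T : Finset (N.D (n + 1))) :
    ∃ S : Finset (N.D n), S.card ≤ T.card.choose 2 ∧
      N.Separates (S : Set (N.D n)) (T : Set _) := by
  classical
  induction T using Finset.induction_on with
  | empty => exact ⟨∅, by simp, by simp [Separates]⟩
  | insert t T ht ih =>
    obtain ⟨S, hcard, hS⟩ := ih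
    have hsep : ∀ y : T, ∃ x, ¬(N.mem n x t ↔ N.mem n x y) := fun y =>
      N.exists_not_mem_iff_of_ne (ne_of_mem_of_not_mem y.2 ht).symm
    choose sep hsep using hsep
    refine ⟨S ∪ Finset.univ.image sep, ?_, ?_⟩
    · calc (S ∪ Finset.univ.image sep).card
          ≤ S.card + (Finset.univ.image sep).card := Finset.card_union_le _ _
        _ ≤ T.card.choose 2 + T.card := add_le_add hcard (Finset.card_image_le.trans (by simp))
        _ = (insert t T).card.choose 2 := by
          rw [Finset.card_insert_of_notMem ht, Nat.choose_succ_succ', Nat.choose_one_right,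
            add_comm]
    · have hsepS : ∀ y : T, sep y ∈ (S ∪ Finset.univ.image sep : Finset (N.D n)) := fun y =>
        Finset.mem_union_right _ (Finset.mem_image_of_mem _ (Finset.mem_univ _))
      intro y hy z hz hyz
      simp only [Finset.coe_insert, mem_insert_iff, Finset.mem_coe] at hy hz
      rcases hy with rfl | hy <;> rcases hz with rfl | hz
      · rfl
      · exact absurd (hyz _ (hsepS ⟨z, hz⟩)) (hsep _)
      · exact absurd (hyz _ (hsepS ⟨y, hy⟩)).symm (hsep _)
      · exact hS y hy z hz fun x hx => hyz x (Finset.mem_union_left _ hx)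

noncomputable def separatingFinset {n : ℕ} (T : Finset (N.D (n + 1))) : Finset (N.D n) :=
  (N.exists_separates_card_le T).choose

lemma card_separatingFinset_le {n : ℕ} (T : Finset (N.D (n + 1))) :
    (N.separatingFinset T).card ≤ T.card.choose 2 :=
  (N.exists_separates_card_le T).choose_spec.1

lemma separates_separatingFinset {n : ℕ} (T : Finset (N.D (n + 1))) :
    N.Separates (N.separatingFinset T : Set (N.D n)) (T : Set _) :=
  (N.exists_separates_card_le T).choose_spec.2

section SepClosure

variable (W : ∀ n, Finset (N.D n)) (top : ℕ)

open Classical in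
noncomputable def sepClosure (n : ℕ) : Finset (N.D n) :=
  if top < n then ∅ else W n ∪ N.separatingFinset (sepClosure (n + 1))
termination_by top + 1 - n

variable {W top}

lemma sepClosure_of_lt {n : ℕ} (h : top < n) : N.sepClosure W top n = ∅ := by
  rw [sepClosure, if_pos h]

lemma subset_sepClosure {n : ℕ} (h : n ≤ top) : W n ⊆ N.sepClosure W top n := by
  classical
  rw [sepClosure, if_neg (not_lt.2 h)]
  exact Finset.subset_union_left

lemma separates_sepClosure (n : ℕ) :
    N.Separates (N.sepClosure W top n : Set (N.D n)) (N.sepClosure W top (n + 1) : Set _) := by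
  classical
  by_cases h : top < n + 1
  · simp [N.sepClosure_of_lt h, Separates]
  · intro y hy z hz hyz
    refine N.separates_separatingFinset _ y hy z hz fun x hx => hyz x ?_
    rw [sepClosure, if_neg (by omega)]
    exact Finset.mem_union_right _ hx

lemma card_sepClosure_le {k : ℕ} (hW : ∀ n, (W n).card ≤ k) {n : ℕ} (h : n ≤ top) :
    (N.sepClosure W top n).card ≤ Gk k (top - n) := by
  classical
  have hstep : (N.sepClosure W top n).card ≤ k + (N.sepClosure W top (n + 1)).card.choose 2 := by
    rw [sepClosure, if_neg (not_lt.2 h)]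
    exact (Finset.card_union_le _ _).trans (add_le_add (hW n) (N.card_separatingFinset_le _))
  rcases h.eq_or_lt with rfl | hlt
  · simpa [N.sepClosure_of_lt (Nat.lt_succ_self n), Gk] using hstep
  · calc (N.sepClosure W top n).card
        ≤ k + (Gk k (top - (n + 1))).choose 2 :=
          hstep.trans (Nat.add_le_add_left (Nat.choose_le_choose 2 (card_sepClosure_le hW hlt)) k)
      _ = Gk k (top - n) := by rw [show top - n = top - (n + 1) + 1 by omega, Gk, add_comm]
termination_by top + 1 - n

end SepClosure

structure Embedding (M N : TSTModel) where
  toFun : ∀ n, M.D n → N.D n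
  injective : ∀ n, Injective (toFun n)
  mem_iff : ∀ n x y, N.mem n (toFun n x) (toFun (n + 1) y) ↔ M.mem n x y

instance {M N : TSTModel} : CoeFun (Embedding M N) fun _ => ∀ n, M.D n → N.D n :=
  ⟨Embedding.toFun⟩

lemma Embedding.cast_apply {M N : TSTModel} (f : Embedding M N) {m n : ℕ} (h : m = n)
    (x : M.D m) : cast (congrArg N.D h) (f m x) = f n (cast (congrArg M.D h) x) := by
  subst h; rfl

lemma _root_.QF.eval_embedding {M N : TSTModel} (f : Embedding M N) {p : ℕ} {ty : Fin p → ℕ}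
    (θ : QF p ty) (v : ∀ i, M.D (ty i)) :
    θ.eval N (fun i => f (ty i) (v i)) ↔ θ.eval M v := by
  induction θ with
  | eq i j h => simp only [QF.eval, f.cast_apply h, (f.injective _).eq_iff]
  | mem i j h => simp only [QF.eval, f.cast_apply h, f.mem_iff]
  | not φ ih => simp only [QF.eval, ih]
  | and φ ψ ih₁ ih₂ => simp only [QF.eval, ih₁, ih₂]
  | or φ ψ ih₁ ih₂ => simp only [QF.eval, ih₁, ih₂]

lemma satEA_of_embedding {M : TSTModel} (f : Embedding M N) {k l : ℕ} {ty : Fin (k + l) → ℕ}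
    {θ : QF (k + l) ty} (a : ∀ i : Fin k, N.D (ty (Fin.castAdd l i)))
    (ha : ∀ b, θ.eval N (Fin.addCases a b)) (hrange : ∀ i, a i ∈ range (f _)) :
    SatEA M k l ty θ := by
  choose a' ha' using hrange
  refine ⟨a', fun b => (θ.eval_embedding f _).1 ?_⟩
  convert ha fun j => f _ (b j) using 2 with i
  refine Fin.addCases (fun i => ?_) (fun j => ?_) i <;> simp [ha']

variable {N}

open Classical in
noncomputable def liftSet {α : Type} {n : ℕ} (g : α → N.D n) (T : Set (N.D (n + 1)))
    (S : Set α) : N.D (n + 1) :=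
  if h : ∃ t ∈ T, {u | N.mem n (g u) t} = S then h.choose
  else (N.comp n (· ∈ g '' S)).choose

lemma mem_liftSet_iff {α : Type} {n : ℕ} {g : α → N.D n} (hg : Injective g)
    (T : Set (N.D (n + 1))) (S : Set α) (u : α) :
    N.mem n (g u) (liftSet g T S) ↔ u ∈ S := by
  unfold liftSet
  split_ifs with h
  · exact Set.ext_iff.1 h.choose_spec.2 u
  · rw [(N.comp n _).choose_spec, hg.mem_set_image]

lemma subset_range_liftSet {α : Type} {n : ℕ} {g : α → N.D n} {S : Set (N.D n)}
    {T : Set (N.D (n + 1))} (hS : N.Separates S T) (hSg : S ⊆ range g) :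
    T ⊆ range (liftSet g T) := by
  intro t ht
  have h : ∃ t' ∈ T, {u | N.mem n (g u) t'} = {u | N.mem n (g u) t} := ⟨t, ht, rfl⟩
  refine ⟨{u | N.mem n (g u) t}, ?_⟩
  rw [liftSet, dif_pos h]
  refine hS _ h.choose_spec.1 _ ht fun x hx => ?_
  obtain ⟨u, rfl⟩ := hSg hx
  exact Set.ext_iff.1 h.choose_spec.2 u

noncomputable def fgLift {X : Type} (f₀ : X → N.D 0) (T : ∀ n, Set (N.D n)) :
    ∀ n, IterP X n → N.D n
  | 0 => f₀
  | n + 1 => liftSet (fgLift f₀ T n) (T (n + 1))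

lemma fgLift_spec {X : Type} {f₀ : X → N.D 0} {T : ∀ n, Set (N.D n)} (hf₀ : Injective f₀)
    (h₀ : T 0 ⊆ range f₀) (hT : ∀ n, N.Separates (T n) (T (n + 1))) (n : ℕ) :
    Injective (fgLift f₀ T n) ∧ T n ⊆ range (fgLift f₀ T n) := by
  induction n with
  | zero => exact ⟨hf₀, h₀⟩
  | succ n ih =>
    refine ⟨fun S₁ S₂ hS => Set.ext fun u => ?_, subset_range_liftSet (hT n) ih.2⟩
    rw [← mem_liftSet_iff ih.1 (T (n + 1)) S₁, ← mem_liftSet_iff ih.1 (T (n + 1)) S₂]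
    exact Iff.of_eq (congrArg _ hS)

lemma exists_embedding_fgModel {X : Type} {f₀ : X → N.D 0} {T : ∀ n, Set (N.D n)}
    (hf₀ : Injective f₀) (h₀ : T 0 ⊆ range f₀) (hT : ∀ n, N.Separates (T n) (T (n + 1))) :
    ∃ f : Embedding (fgModel X) N, ∀ n, T n ⊆ range (f n) :=
  ⟨{ toFun := fgLift f₀ T
     injective := fun n => (fgLift_spec hf₀ h₀ hT n).1
     mem_iff := fun n x y => mem_liftSet_iff (fgLift_spec hf₀ h₀ hT n).1 (T (n + 1)) y x },
    fun n => (fgLift_spec hf₀ h₀ hT n).2⟩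

end TSTModel

lemma Finset.exists_injective_subset_range {α β : Type} [Fintype α] [Infinite β]
    (s : Finset β) (h : s.card ≤ Fintype.card α) :
    ∃ f : α → β, Injective f ∧ ↑s ⊆ Set.range f := by
  obtain ⟨t, hst, ht⟩ := Infinite.exists_superset_card_eq s _ h
  let e : α ≃ t := Fintype.equivOfCardEq (by simpa using ht.symm)
  exact ⟨fun x => e x, Subtype.val_injective.comp e.injective,
    fun y hy => ⟨e.symm ⟨y, hst hy⟩, by simp⟩⟩

open Classical in
noncomputable def witnessesAt {D : ℕ → Type} {k : ℕ} {r : Fin k → ℕ} (a : ∀ i, D (r i))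
    (n : ℕ) : Finset (D n) :=
  Finset.univ.image fun i : {i // r i = n} => cast (congrArg D i.2) (a i)

lemma card_witnessesAt_le {D : ℕ → Type} {k : ℕ} {r : Fin k → ℕ} (a : ∀ i, D (r i)) (n : ℕ) :
    (witnessesAt a n).card ≤ k := by
  classical
  exact Finset.card_image_le.trans ((Fintype.card_subtype_le _).trans (Fintype.card_fin k).le)

lemma mem_witnessesAt {D : ℕ → Type} {k : ℕ} {r : Fin k → ℕ} (a : ∀ i, D (r i)) (i : Fin k) :
    a i ∈ witnessesAt a (r i) := by
  classical
  exact Finset.mem_image.2 ⟨⟨i, rfl⟩, Finset.mem_univ _, rfl⟩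

theorem stmt14_general (N : TSTModel) (hInf : Infinite (N.D 0))
    (k l : ℕ) (ty : Fin (k + l) → ℕ) (θ : QF (k + l) ty)
    (rmax : ℕ) (hr : ∀ i : Fin k, ty (Fin.castAdd l i) ≤ rmax)
    (hN : SatEA N k l ty θ)
    (X : Type) [Fintype X] (hcard : Gk k rmax ≤ Fintype.card X) :
    SatEA (fgModel X) k l ty θ := by
  obtain ⟨a, ha⟩ := hN
  set T := N.sepClosure (witnessesAt a) rmax
  have hT₀ : (T 0).card ≤ Fintype.card X :=
    (N.card_sepClosure_le (card_witnessesAt_le a) (Nat.zero_le _)).trans hcard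
  obtain ⟨f₀, hf₀, h₀⟩ := (T 0).exists_injective_subset_range hT₀
  obtain ⟨f, hf⟩ := TSTModel.exists_embedding_fgModel hf₀ h₀ fun n => N.separates_sepClosure n
  exact N.satEA_of_embedding f a ha fun i =>
    hf _ (N.subset_sepClosure (hr i) (mem_witnessesAt a i))

/-- `∃*∀*` sentences have the finitely generated model property: if an `∃*∀*` sentence
with existential types `r₁ ≤ ⋯ ≤ r_k ≤ rmax` holds in a model `N` of TSTI, then it
holds in the finitely generated model of TST on at least `G_k(rmax)` atoms. -/
theorem stmt14 (N : TSTModel) (hInf : Infinite (N.D 0))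
    (k l : ℕ) (ty : Fin (k + l) → ℕ) (θ : QF (k + l) ty)
    (hmono : Monotone fun i : Fin k => ty (Fin.castAdd l i))
    (rmax : ℕ) (hr : ∀ i : Fin k, ty (Fin.castAdd l i) ≤ rmax)
    (hN : SatEA N k l ty θ)
    (X : Type) [Fintype X] (hcard : Gk k rmax ≤ Fintype.card X) :
    SatEA (fgModel X) k l ty θ :=
  stmt14_general N hInf k l ty θ rmax hr hN X hcard
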